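/- arXiv:1807.06720 — 3 statements merged into one kernel-verified Lean document; each statement's English description precedes it below -/
import Mathlib

section
/- Let V be a normal supervisor on the plant G (i.e., Σ_c ⊆ Σ_o). Then L(G) ∩ P_o^{-1}(P_o(L(V/G))) = L(V/G); equivalently, every string s ∈ L(G) with P_o(s) ∈ P_o(L(V/G)) already belongs to L(V/G). -/
/-!
Induct on `s ∈ L(G)`, peeling off the last event `σ`. If `σ` is unobservable it is
uncontrollable by normality, hence always enabled, and `s` and its prefix have the same
observation. If `σ` is observable, the closed-loop string with the same observation as `s`
enabled `σ` at an observation that is also that of the prefix, so `V` enables `σ` after the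
prefix too.
-/

open scoped Classical

namespace ActuatorAttack

variable {A : Type*}

/-- Natural projection onto a sub-alphabet `S`: erase the letters not in `S`. -/
noncomputable def proj (S : Set A) (l : List A) : List A :=
  l.filter (fun a => decide (a ∈ S))

/-- The least language containing `ε` and closed under appending an event `σ`
allowed by `allow` at `s`, provided the result lies in the plant language `LG`. -/
inductive Lang (LG : Set (List A)) (allow : List A → Set A) : List A → Prop
  | nil : Lang LG allow []
  | snoc {s : List A} {σ : A} : Lang LG allow s → σ ∈ allow s →
      (s ++ [σ]) ∈ LG → Lang LG allow (s ++ [σ])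

/-- The closed-loop language `L(V/G)`. -/
def LVG (LG : Set (List A)) (So : Set A) (V : List A → Set A) :
    Set (List A) :=
  {s | Lang LG (fun t => V (proj So t)) s}

/-- Auxiliary function for the attacker-observation map: `pre` is the prefix
of the supervisor observation sequence already processed. -/
noncomputable def phatAux (V : List A → Set A) (SoA : Set A) :
    List A → List A → List (List A × Set A)
  | _, [] => []
  | pre, σ :: rest =>
      (proj SoA [σ], V (pre ++ [σ])) :: phatAux V SoA (pre ++ [σ]) rest

/-- The attacker-observation map `P̂`: the i-th letter of `P̂(σ₁⋯σₙ)` is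
`(P_{o,A}(σᵢ), V(σ₁⋯σᵢ))`. -/
noncomputable def phat (V : List A → Set A) (SoA : Set A) (w : List A) :
    List (List A × Set A) :=
  phatAux V SoA [] w

/-- The attacked supervisor `V_A`. -/
noncomputable def VA (V : List A → Set A) (ScA SoA : Set A)
    (Att : List (List A × Set A) → Set A) (w : List A) : Set A :=
  (V w \ ScA) ∪ Att (phat V SoA w)

/-- The attacked closed-loop language `L(V_A/G)`. -/
def LVAG (LG : Set (List A)) (So : Set A) (V : List A → Set A)
    (ScA SoA : Set A) (Att : List (List A × Set A) → Set A) : Set (List A) :=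
  {s | Lang LG (fun t =>
      {σ | proj So t ∈ proj So '' LVG LG So V ∧
           σ ∈ VA V ScA SoA Att (proj So t)}) s}

/-- An attacker is enabling if it enables every attackable event enabled by
the supervisor. -/
def Enabling (LG : Set (List A)) (So : Set A) (V : List A → Set A)
    (ScA SoA : Set A) (Att : List (List A × Set A) → Set A) : Prop :=
  ∀ w ∈ proj So '' LVG LG So V, V w ∩ ScA ⊆ Att (phat V SoA w)

/-- An attacker is successful if the attacked closed-loop language meets the
damage set, and everything outside `P_o⁻¹(P_o(L(V/G)))` lies in `L_dmg·Σ*`. -/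
def Successful (LG : Set (List A)) (So : Set A) (V : List A → Set A)
    (ScA SoA : Set A) (Att : List (List A × Set A) → Set A)
    (Ldmg : Set (List A)) : Prop :=
  (LVAG LG So V ScA SoA Att ∩ Ldmg).Nonempty ∧
  LVAG LG So V ScA SoA Att \ (proj So ⁻¹' (proj So '' LVG LG So V)) ⊆
    {t | ∃ d ∈ Ldmg, d <+: t}

/-- `(s, σ)` is an attack pair. -/
def AttackPair (LG : Set (List A)) (So : Set A) (V : List A → Set A)
    (ScA SoA : Set A) (Ldmg : Set (List A)) (s : List A) (σ : A) : Prop :=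
  s ∈ LVG LG So V ∧ σ ∈ ScA ∧ s ++ [σ] ∈ Ldmg ∧
  ∀ s' ∈ LVG LG So V,
    phat V SoA (proj So s) = phat V SoA (proj So s') →
    s' ++ [σ] ∈ LG → s' ++ [σ] ∈ Ldmg

/-- `En(s, σ)`: one-step `σ`-extensions in `L(G)` of strings of `L(V/G)` that
are attacker-observation equivalent to `s`. -/
def En (LG : Set (List A)) (So : Set A) (V : List A → Set A)
    (SoA : Set A) (s : List A) (σ : A) : Set (List A) :=
  {t | ∃ s' ∈ LVG LG So V, t = s' ++ [σ] ∧ t ∈ LG ∧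
       phat V SoA (proj So s) = phat V SoA (proj So s')}

/-- `I(ŵ)`: attackable events `σ` such that some string `s'` of `L(V/G)` with
attacker observation `ŵ` forms an attack pair `(s', σ)`. -/
def ISet (LG : Set (List A)) (So : Set A) (V : List A → Set A)
    (ScA SoA : Set A) (Ldmg : Set (List A))
    (w : List (List A × Set A)) : Set A :=
  {σ | σ ∈ ScA ∧ ∃ s' ∈ LVG LG So V,
        phat V SoA (proj So s') = w ∧ AttackPair LG So V ScA SoA Ldmg s' σ}

/-- The supremal attacker `A^sup`. -/
def Asup (LG : Set (List A)) (So : Set A) (V : List A → Set A)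
    (ScA SoA : Set A) (Ldmg : Set (List A))
    (w : List (List A × Set A)) : Set A :=
  {σ | ∃ s ∈ LVG LG So V, phat V SoA (proj So s) = w ∧
        σ ∈ V (proj So s) ∩ ScA} ∪
  ISet LG So V ScA SoA Ldmg w

section Normality

variable {LG : Set (List A)} {So : Set A} {V : List A → Set A}

theorem proj_append_singleton (S : Set A) (u : List A) (a : A) :
    proj S (u ++ [a]) = proj S u ++ if a ∈ S then [a] else [] := by
  by_cases ha : a ∈ S <;> simp [proj, ha]

theorem LVG_subset (hnil : [] ∈ LG) : LVG LG So V ⊆ LG := by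
  intro s hs
  cases hs with
  | nil => exact hnil
  | snoc _ _ h => exact h

theorem LVG.mem_V_of_proj_eq_append {s w : List A} {σ : A} (hs : s ∈ LVG LG So V)
    (h : proj So s = w ++ [σ]) : σ ∈ V w ∧ w ∈ proj So '' LVG LG So V := by
  induction hs generalizing w with
  | nil => simp [proj] at h
  | @snoc s τ hs hτ _ ih =>
    rw [proj_append_singleton] at h
    by_cases hτo : τ ∈ So
    · rw [if_pos hτo] at h
      obtain ⟨rfl, hτσ⟩ := List.append_inj' h rfl
      obtain rfl : τ = σ := List.singleton_inj.mp hτσ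
      exact ⟨hτ, s, hs, rfl⟩
    · rw [if_neg hτo, List.append_nil] at h
      exact ih h

theorem mem_LVG_of_proj_mem_image (hpref : ∀ s t : List A, s <+: t → t ∈ LG → s ∈ LG)
    (hunobs : ∀ w, Soᶜ ⊆ V w) {u : List A} (hu : u ∈ LG)
    (hobs : proj So u ∈ proj So '' LVG LG So V) : u ∈ LVG LG So V := by
  induction u using List.reverseRecOn with
  | nil => exact Lang.nil
  | append_singleton u σ ih =>
    have huG : u ∈ LG := hpref u (u ++ [σ]) (List.prefix_append u [σ]) hu
    obtain ⟨t, ht, hpt⟩ := hobs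
    rw [proj_append_singleton] at hpt
    by_cases hσo : σ ∈ So
    · rw [if_pos hσo] at hpt
      obtain ⟨hσV, hobs'⟩ := LVG.mem_V_of_proj_eq_append ht hpt
      exact Lang.snoc (ih huG hobs') hσV hu
    · rw [if_neg hσo, List.append_nil] at hpt
      exact Lang.snoc (ih huG ⟨t, ht, hpt⟩) (hunobs _ hσo) hu

end Normality

theorem stmt_0_general {A : Type*} (So Sc : Set A) (LG : Set (List A))
    (hnil : [] ∈ LG) (hpref : ∀ s t : List A, s <+: t → t ∈ LG → s ∈ LG)
    (V : List A → Set A) (hV : ∀ w, Scᶜ ⊆ V w)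
    (hnormV : Sc ⊆ So) :
    LG ∩ proj So ⁻¹' (proj So '' LVG LG So V) = LVG LG So V :=
  have hunobs : ∀ w, Soᶜ ⊆ V w := fun w =>
    (Set.compl_subset_compl.mpr hnormV).trans (hV w)
  Set.Subset.antisymm (fun _ ⟨hu, hobs⟩ => mem_LVG_of_proj_mem_image hpref hunobs hu hobs)
    fun s hs => ⟨LVG_subset hnil hs, s, hs, rfl⟩

/-- For a normal supervisor `V` on `G`,
`L(G) ∩ P_o⁻¹(P_o(L(V/G))) = L(V/G)`. -/
theorem stmt_0 {A : Type*} [Fintype A] (So Sc : Set A) (LG : Set (List A))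
    (hnil : [] ∈ LG) (hpref : ∀ s t : List A, s <+: t → t ∈ LG → s ∈ LG)
    (V : List A → Set A) (hV : ∀ w, Scᶜ ⊆ V w)
    (hnormV : Sc ⊆ So) :
    LG ∩ proj So ⁻¹' (proj So '' LVG LG So V) = LVG LG So V :=
  stmt_0_general So Sc LG hnil hpref V hV hnormV

end ActuatorAttack
end

section
/- Let V be a normal supervisor on the plant G, let the attack constraint be normal (Σ_{c,A} ⊆ Σ_{o,A}), and let A be any attacker. If s ∈ L(V/G) ∩ L(V_A/G), s' ∈ L(V/G), and P̂(P_o(s)) = P̂(P_o(s')), then s' ∈ L(V_A/G). -/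
open scoped Classical

namespace ActuatorAttack

variable {A : Type*}

/-!
Since `V_A` removes every attackable event from `V`, each attackable event occurring in a string
of `L(V_A/G)` was enabled by the attacker, at the attacker observation just before it. Attackable
events are observable to the attacker, so an observation-equivalent `s' ∈ L(V/G)` contains the
same attackable events at the same places of `P̂`, and each of them is enabled by the attacker
as well; the remaining events of `s'` are enabled by `V` and untouched by the attack.
-/

section Projection

variable {S : Set A}

lemma proj_append (l₁ l₂ : List A) : proj S (l₁ ++ l₂) = proj S l₁ ++ proj S l₂ :=
  List.filter_append ..

lemma proj_singleton_of_mem {σ : A} (h : σ ∈ S) : proj S [σ] = [σ] := by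
  simp [proj, h]

lemma proj_singleton_of_not_mem {σ : A} (h : σ ∉ S) : proj S [σ] = [] := by
  simp [proj, h]

lemma eq_of_proj_singleton_eq {σ τ : A} (h : proj S [τ] = [σ]) : τ = σ := by
  by_cases hτ : τ ∈ S
  · rwa [proj_singleton_of_mem hτ, List.singleton_inj] at h
  · simp [proj_singleton_of_not_mem hτ] at h

end Projection

section AttackerObservation

variable (V : List A → Set A) (SoA : Set A)

lemma phatAux_append :
    ∀ l₁ pre l₂ : List A,
      phatAux V SoA pre (l₁ ++ l₂) = phatAux V SoA pre l₁ ++ phatAux V SoA (pre ++ l₁) l₂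
  | [], pre, l₂ => by simp [phatAux]
  | σ :: rest, pre, l₂ => by simp [phatAux, phatAux_append rest (pre ++ [σ]) l₂]

lemma length_phatAux : ∀ l pre : List A, (phatAux V SoA pre l).length = l.length
  | [], _ => rfl
  | σ :: rest, pre => by simp [phatAux, length_phatAux rest (pre ++ [σ])]

lemma phat_append (l₁ l₂ : List A) :
    phat V SoA (l₁ ++ l₂) = phat V SoA l₁ ++ phatAux V SoA l₁ l₂ := by
  simp [phat, phatAux_append]

lemma phat_append_singleton (w : List A) (σ : A) :
    phat V SoA (w ++ [σ]) = phat V SoA w ++ [(proj SoA [σ], V (w ++ [σ]))] := by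
  simp [phat_append, phatAux]

lemma length_phat (w : List A) : (phat V SoA w).length = w.length :=
  length_phatAux V SoA w []

variable {V SoA}

lemma exists_prefix_phat_eq {w₁ w₂ u : List A} (heq : phat V SoA w₁ = phat V SoA w₂)
    (hu : u <+: w₂) : ∃ v, v <+: w₁ ∧ phat V SoA v = phat V SoA u := by
  obtain ⟨r, rfl⟩ := hu
  have hlen : u.length ≤ w₁.length := by
    have := congrArg List.length heq
    simp only [length_phat, List.length_append] at this
    omega
  refine ⟨w₁.take u.length, List.take_prefix _ _, ?_⟩
  rw [← List.take_append_drop u.length w₁, phat_append, phat_append] at heq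
  exact (List.append_inj heq (by simp [length_phat, hlen])).1

lemma exists_prefix_append_singleton_phat_eq {w₁ w₂ u : List A} {σ : A}
    (heq : phat V SoA w₁ = phat V SoA w₂) (hσ : σ ∈ SoA) (hu : u ++ [σ] <+: w₂) :
    ∃ v, v ++ [σ] <+: w₁ ∧ phat V SoA v = phat V SoA u := by
  obtain ⟨v, hv, hveq⟩ := exists_prefix_phat_eq heq hu
  rcases List.eq_nil_or_concat v with rfl | ⟨v', τ, rfl⟩
  · simpa [length_phat] using congrArg List.length hveq
  rw [List.concat_eq_append] at hv hveq
  rw [phat_append_singleton, phat_append_singleton,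
    proj_singleton_of_mem hσ] at hveq
  obtain ⟨hv'eq, hlast⟩ := List.append_inj' hveq rfl
  have hτσ : τ = σ := eq_of_proj_singleton_eq (congrArg Prod.fst (List.singleton_inj.1 hlast))
  exact ⟨v', hτσ ▸ hv, hv'eq⟩

end AttackerObservation

section ClosedLoop

variable {LG : Set (List A)} {So : Set A} {V : List A → Set A} {ScA SoA : Set A}
  {Att : List (List A × Set A) → Set A}

lemma mem_Att_of_mem_LVAG {s : List A} (hs : s ∈ LVAG LG So V ScA SoA Att) {w : List A} {σ : A}
    (hw : w ++ [σ] <+: proj So s) (hσ : σ ∈ ScA) : σ ∈ Att (phat V SoA w) := by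
  induction hs with
  | nil => simpa [proj] using hw.length_le
  | @snoc t τ _ hτ _ ih =>
    by_cases hτo : τ ∈ So
    · rw [proj_append, proj_singleton_of_mem hτo, List.prefix_concat_iff] at hw
      rcases hw with hlast | hw
      · obtain ⟨rfl, hστ⟩ := List.append_inj' hlast rfl
        obtain rfl := List.singleton_inj.1 hστ
        exact hτ.2.resolve_left fun h => h.2 hσ
      · exact ih hw
    · rw [proj_append, proj_singleton_of_not_mem hτo, List.append_nil] at hw
      exact ih hw

lemma mem_LVAG_of_mem_LVG (hScA : ScA ⊆ So) {t : List A} (ht : t ∈ LVG LG So V)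
    (hAtt : ∀ w σ, w ++ [σ] <+: proj So t → σ ∈ ScA → σ ∈ Att (phat V SoA w)) :
    t ∈ LVAG LG So V ScA SoA Att := by
  induction ht with
  | nil => exact Lang.nil
  | @snoc u τ hu hτ hG ih =>
    have hpre : proj So u <+: proj So (u ++ [τ]) := by
      rw [proj_append]; exact List.prefix_append _ _
    refine Lang.snoc (ih fun w σ hw => hAtt w σ (hw.trans hpre)) ⟨⟨u, hu, rfl⟩, ?_⟩ hG
    by_cases hτA : τ ∈ ScA
    · rw [proj_append, proj_singleton_of_mem (hScA hτA)] at hAtt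
      exact Or.inr (hAtt _ _ List.prefix_rfl hτA)
    · exact Or.inl ⟨hτ, hτA⟩

end ClosedLoop

theorem stmt_7_general {A : Type*} (So : Set A) (LG : Set (List A))
    (V : List A → Set A)
    (ScA SoA : Set A) (hoA : SoA ⊆ So)
    (hnormA : ScA ⊆ SoA)
    (Att : List (List A × Set A) → Set A)
    (s s' : List A)
    (hsA : s ∈ LVAG LG So V ScA SoA Att)
    (hs' : s' ∈ LVG LG So V)
    (heq : phat V SoA (proj So s) = phat V SoA (proj So s')) :
    s' ∈ LVAG LG So V ScA SoA Att := by
  refine mem_LVAG_of_mem_LVG (hnormA.trans hoA) hs' fun w σ hw hσ => ?_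
  obtain ⟨v, hv, hvw⟩ := exists_prefix_append_singleton_phat_eq heq (hnormA hσ) hw
  exact hvw ▸ mem_Att_of_mem_LVAG hsA hv hσ

/-- Normal supervisor, normal attack constraint: if
`s ∈ L(V/G) ∩ L(V_A/G)`, `s' ∈ L(V/G)` and `P̂(P_o(s)) = P̂(P_o(s'))`,
then `s' ∈ L(V_A/G)`. -/
theorem stmt_7 {A : Type*} [Fintype A] (So Sc : Set A) (LG : Set (List A))
    (hnil : [] ∈ LG) (hpref : ∀ s t : List A, s <+: t → t ∈ LG → s ∈ LG)
    (V : List A → Set A) (hV : ∀ w, Scᶜ ⊆ V w)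
    (hnormV : Sc ⊆ So)
    (ScA SoA : Set A) (hcA : ScA ⊆ Sc) (hoA : SoA ⊆ So)
    (hnormA : ScA ⊆ SoA)
    (Att : List (List A × Set A) → Set A) (hAtt : ∀ x, Att x ⊆ ScA)
    (s s' : List A)
    (hs : s ∈ LVG LG So V) (hsA : s ∈ LVAG LG So V ScA SoA Att)
    (hs' : s' ∈ LVG LG So V)
    (heq : phat V SoA (proj So s) = phat V SoA (proj So s')) :
    s' ∈ LVAG LG So V ScA SoA Att :=
  stmt_7_general So LG V ScA SoA hoA hnormA Att s s' hsA hs' heq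

end ActuatorAttack
end

section
/- Let V be a normal supervisor on the plant G, let the attack constraint be normal (Σ_{c,A} ⊆ Σ_{o,A}), and let (s, σ) be an attack pair. Then there exists an enabling attacker A such that A(P̂(P_o(s))) = (V(P_o(s)) ∩ Σ_{c,A}) ∪ {σ}, A(P̂(w)) = V(w) ∩ Σ_{c,A} for every w ∈ P_o(L(V/G)) with P̂(w) ≠ P̂(P_o(s)), and A is successful; moreover, for this A, ∅ ≠ L(V_A/G) \ L(V/G) ⊆ L_dmg. -/
/-!
The attacker behaves like the supervisor except that, whenever it observes `P̂(P_o(s))`, it also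
enables `σ`. Under a normal attack constraint `σ` is observable, so once `σ` fires the supervisor
observation leaves `P_o(L(V/G))` and the attacked closed loop is stuck; and by the attack-pair
property every string `s'σ` the attack adds is damaging. Hence `L(V_A/G)` is `L(V/G)` together
with some damaging strings, one of them being `sσ`.
-/

open scoped Classical

namespace ActuatorAttack

variable {A : Type*}

section Lang

variable {LG : Set (List A)} {allow allow' : List A → Set A}

theorem Lang.mem (hnil : [] ∈ LG) {t : List A} (h : Lang LG allow t) : t ∈ LG := by
  cases h with
  | nil => exact hnil
  | snoc _ _ hg => exact hg

theorem Lang.of_prefix {t : List A} (h : Lang LG allow t) {u : List A} (hut : u <+: t) :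
    Lang LG allow u := by
  induction h generalizing u with
  | nil => rw [List.prefix_nil.mp hut]; exact Lang.nil
  | snoc hs hσ hg ih =>
    rcases List.prefix_concat_iff.mp hut with rfl | hu
    · exact Lang.snoc hs hσ hg
    · exact ih hu

theorem Lang.mono (hmono : ∀ u, Lang LG allow u → allow u ⊆ allow' u) {t : List A}
    (h : Lang LG allow t) : Lang LG allow' t := by
  induction h with
  | nil => exact Lang.nil
  | snoc hs hσ hg ih => exact Lang.snoc ih (hmono _ hs hσ) hg

end Lang

theorem proj_append_singleton_s9 {S : Set A} {σ : A} (hσ : σ ∈ S) (l : List A) :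
    proj S (l ++ [σ]) = proj S l ++ [σ] := by
  simp [proj, hσ]

theorem exists_of_proj_eq_append_singleton {S : Set A} {v x : List A} {σ : A}
    (h : proj S v = x ++ [σ]) : ∃ v₁ v₂, v = v₁ ++ σ :: v₂ ∧ proj S v₁ = x := by
  obtain ⟨l₁, l₂, rfl, hl₁, hl₂⟩ := List.filter_eq_append_iff.mp h
  obtain ⟨m₁, m₂, rfl, hm₁, -, -⟩ := List.filter_eq_cons_iff.mp hl₂
  refine ⟨l₁ ++ m₁, m₂, by simp, ?_⟩
  simpa [proj, List.filter_append, List.filter_eq_nil_iff.mpr hm₁] using hl₁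

theorem phatAux_append_singleton (V : List A → Set A) (SoA : Set A) (pre l : List A) (a : A) :
    phatAux V SoA pre (l ++ [a]) =
      phatAux V SoA pre l ++ [(proj SoA [a], V (pre ++ l ++ [a]))] := by
  induction l generalizing pre with
  | nil => simp [phatAux]
  | cons b l ih => simp [phatAux, ih]

-- The last letter of `P̂ w` carries `V w`.
theorem V_eq_of_phat_eq {V : List A → Set A} {SoA : Set A} {w w' : List A}
    (h : phat V SoA w = phat V SoA w') : V w = V w' := by
  rcases List.eq_nil_or_concat w with rfl | ⟨l, a, rfl⟩ <;>
    rcases List.eq_nil_or_concat w' with rfl | ⟨l', a', rfl⟩ <;>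
    simp_all [phat, phatAux_append_singleton, phatAux]

section Attacker

variable (V : List A → Set A) (ScA SoA : Set A)

/-- Under this attacker `V_A = V`. -/
def passiveAttacker (x : List (List A × Set A)) : Set A :=
  {τ | τ ∈ ScA ∧ ∃ w, phat V SoA w = x ∧ τ ∈ V w}

def oneShotAttacker (ŵ : List (List A × Set A)) (σ : A) (x : List (List A × Set A)) :
    Set A :=
  if x = ŵ then insert σ (passiveAttacker V ScA SoA x) else passiveAttacker V ScA SoA x

variable {V ScA SoA} {LG : Set (List A)} {So : Set A} {Ldmg : Set (List A)} {s : List A}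

theorem passiveAttacker_phat (w : List A) :
    passiveAttacker V ScA SoA (phat V SoA w) = V w ∩ ScA := by
  ext τ
  constructor
  · rintro ⟨hτ, w', hw', hτV⟩
    exact ⟨V_eq_of_phat_eq hw' ▸ hτV, hτ⟩
  · rintro ⟨hτV, hτ⟩
    exact ⟨hτ, w, rfl, hτV⟩

theorem oneShotAttacker_subset {ŵ : List (List A × Set A)} {σ : A} (hσ : σ ∈ ScA)
    (x : List (List A × Set A)) : oneShotAttacker V ScA SoA ŵ σ x ⊆ ScA := by
  have hpassive : passiveAttacker V ScA SoA x ⊆ ScA := fun _ hτ => hτ.1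
  unfold oneShotAttacker
  split_ifs
  · exact Set.insert_subset hσ hpassive
  · exact hpassive

theorem oneShotAttacker_self (ŵ : List (List A × Set A)) (σ : A) :
    oneShotAttacker V ScA SoA ŵ σ ŵ = insert σ (passiveAttacker V ScA SoA ŵ) :=
  if_pos rfl

theorem oneShotAttacker_of_ne {ŵ x : List (List A × Set A)} {σ : A} (hx : x ≠ ŵ) :
    oneShotAttacker V ScA SoA ŵ σ x = passiveAttacker V ScA SoA x :=
  if_neg hx

theorem enabling_oneShotAttacker (ŵ : List (List A × Set A)) (σ : A) :
    Enabling LG So V ScA SoA (oneShotAttacker V ScA SoA ŵ σ) := by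
  intro w _
  rw [← passiveAttacker_phat]
  unfold oneShotAttacker
  split_ifs
  · exact Set.subset_insert _ _
  · exact subset_rfl

theorem LVG_subset_LVAG {Att : List (List A × Set A) → Set A}
    (hAtt : Enabling LG So V ScA SoA Att) : LVG LG So V ⊆ LVAG LG So V ScA SoA Att := by
  refine fun t ht => Lang.mono (fun u hu τ hτ => ?_) ht
  refine ⟨⟨u, hu, rfl⟩, ?_⟩
  by_cases hτA : τ ∈ ScA
  · exact Or.inr (hAtt _ ⟨u, hu, rfl⟩ ⟨hτ, hτA⟩)
  · exact Or.inl ⟨hτ, hτA⟩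

theorem mem_oneShotAttacker_phat {ŵ : List (List A × Set A)} {σ τ : A} {w : List A} :
    τ ∈ oneShotAttacker V ScA SoA ŵ σ (phat V SoA w) ↔
      τ ∈ V w ∩ ScA ∨ phat V SoA w = ŵ ∧ τ = σ := by
  by_cases hw : phat V SoA w = ŵ
  · rw [hw, oneShotAttacker_self, ← hw, passiveAttacker_phat]
    simp [or_comm]
  · rw [oneShotAttacker_of_ne hw, passiveAttacker_phat]
    simp [hw]

/-- Every string of `L(V/G)` observed as `w σ` has a prefix `s' σ` with `P̂ s' = P̂ s`, which the
attack pair declares damaging. -/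
theorem append_singleton_not_mem_proj_LVG {σ : A} (hnil : [] ∈ LG) (hLdV : Ldmg ∩ LVG LG So V = ∅)
    (hap : AttackPair LG So V ScA SoA Ldmg s σ) {w : List A}
    (hw : phat V SoA w = phat V SoA (proj So s)) : w ++ [σ] ∉ proj So '' LVG LG So V := by
  rintro ⟨v, hv, hvw⟩
  obtain ⟨v₁, v₂, rfl, rfl⟩ := exists_of_proj_eq_append_singleton hvw
  have hv₁ : v₁ ∈ LVG LG So V := Lang.of_prefix hv (List.prefix_append _ _)
  have hv₁σ : v₁ ++ [σ] ∈ LVG LG So V := Lang.of_prefix hv ⟨v₂, by simp⟩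
  have hdmg : v₁ ++ [σ] ∈ Ldmg := hap.2.2.2 v₁ hv₁ hw.symm (Lang.mem hnil hv₁σ)
  exact Set.disjoint_left.mp (Set.disjoint_iff_inter_eq_empty.mpr hLdV) hdmg hv₁σ

theorem mem_LVG_or_of_mem_LVAG_oneShotAttacker {ŵ : List (List A × Set A)} {σ : A} (hσ : σ ∈ So)
    (hblock : ∀ w, phat V SoA w = ŵ → w ++ [σ] ∉ proj So '' LVG LG So V) {t : List A}
    (ht : t ∈ LVAG LG So V ScA SoA (oneShotAttacker V ScA SoA ŵ σ)) :
    t ∈ LVG LG So V ∨ ∃ s' ∈ LVG LG So V, phat V SoA (proj So s') = ŵ ∧ t = s' ++ [σ] := by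
  induction ht with
  | nil => exact Or.inl Lang.nil
  | @snoc u τ _ hτ hg ih =>
    obtain ⟨hobs, hτ⟩ := hτ
    rcases ih with hu | ⟨s', -, hs', rfl⟩
    · rcases hτ with ⟨hτV, -⟩ | hτA
      · exact Or.inl (Lang.snoc hu hτV hg)
      · rcases mem_oneShotAttacker_phat.mp hτA with ⟨hτV, -⟩ | ⟨hu', rfl⟩
        · exact Or.inl (Lang.snoc hu hτV hg)
        · exact Or.inr ⟨u, hu, hu', rfl⟩
    · rw [proj_append_singleton_s9 hσ] at hobs
      exact absurd hobs (hblock _ hs')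

theorem LVAG_oneShotAttacker_subset {σ : A} (hnil : [] ∈ LG) (hσ : σ ∈ So)
    (hLdV : Ldmg ∩ LVG LG So V = ∅)
    (hap : AttackPair LG So V ScA SoA Ldmg s σ) :
    LVAG LG So V ScA SoA (oneShotAttacker V ScA SoA (phat V SoA (proj So s)) σ) ⊆
      LVG LG So V ∪ Ldmg := by
  intro t ht
  rcases mem_LVG_or_of_mem_LVAG_oneShotAttacker hσ
      (fun _ hw => append_singleton_not_mem_proj_LVG hnil hLdV hap hw) ht with
    h | ⟨s', hs', hs's, rfl⟩
  · exact Or.inl h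
  · exact Or.inr (hap.2.2.2 s' hs' hs's.symm (Lang.mem hnil ht))

end Attacker

theorem stmt_9_general {A : Type*} (So : Set A) (LG : Set (List A))
    (hnil : [] ∈ LG)
    (V : List A → Set A)
    (ScA SoA : Set A) (hoA : SoA ⊆ So)
    (hnormA : ScA ⊆ SoA)
    (Ldmg : Set (List A)) (hLd : Ldmg ⊆ LG)
    (hLdV : Ldmg ∩ LVG LG So V = ∅)
    (s : List A) (σ : A)
    (hap : AttackPair LG So V ScA SoA Ldmg s σ) :
    ∃ Att : List (List A × Set A) → Set A, (∀ x, Att x ⊆ ScA) ∧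
      Enabling LG So V ScA SoA Att ∧
      Att (phat V SoA (proj So s)) = (V (proj So s) ∩ ScA) ∪ {σ} ∧
      (∀ w ∈ proj So '' LVG LG So V,
        phat V SoA w ≠ phat V SoA (proj So s) →
        Att (phat V SoA w) = V w ∩ ScA) ∧
      Successful LG So V ScA SoA Att Ldmg ∧
      (LVAG LG So V ScA SoA Att \ LVG LG So V).Nonempty ∧
      LVAG LG So V ScA SoA Att \ LVG LG So V ⊆ Ldmg := by
  have ⟨hs, hσ, hsσ, _⟩ := hap
  have hattacked := LVAG_oneShotAttacker_subset hnil (hoA (hnormA hσ)) hLdV hap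
  have henabling : Enabling LG So V ScA SoA
      (oneShotAttacker V ScA SoA (phat V SoA (proj So s)) σ) :=
    enabling_oneShotAttacker _ σ
  have hsσ_attacked : s ++ [σ] ∈ LVAG LG So V ScA SoA
      (oneShotAttacker V ScA SoA (phat V SoA (proj So s)) σ) :=
    Lang.snoc (LVG_subset_LVAG henabling hs)
      ⟨⟨s, hs, rfl⟩, Or.inr (mem_oneShotAttacker_phat.mpr (Or.inr ⟨rfl, rfl⟩))⟩ (hLd hsσ)
  have hsσ_not_LVG : s ++ [σ] ∉ LVG LG So V :=
    Set.disjoint_left.mp (Set.disjoint_iff_inter_eq_empty.mpr hLdV) hsσ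
  refine ⟨_, oneShotAttacker_subset hσ, henabling, ?_, fun w _ hw => ?_,
    ⟨⟨_, hsσ_attacked, hsσ⟩, ?_⟩, ⟨_, hsσ_attacked, hsσ_not_LVG⟩, ?_⟩
  · rw [oneShotAttacker_self, passiveAttacker_phat, Set.union_singleton]
  · rw [oneShotAttacker_of_ne hw, passiveAttacker_phat]
  · rintro t ⟨ht, hunobs⟩
    exact ⟨t, (hattacked ht).resolve_left fun h => hunobs ⟨t, h, rfl⟩, List.prefix_refl t⟩
  · rintro t ⟨ht, ht'⟩
    exact (hattacked ht).resolve_left ht'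

/-- From an attack pair `(s, σ)` one can build an enabling
attacker that attacks exactly at `P̂(P_o(s))` with event `σ`, and this
attacker is successful with `∅ ≠ L(V_A/G) \ L(V/G) ⊆ L_dmg`. -/
theorem stmt_9 {A : Type*} [Fintype A] (So Sc : Set A) (LG : Set (List A))
    (hnil : [] ∈ LG) (hpref : ∀ s t : List A, s <+: t → t ∈ LG → s ∈ LG)
    (V : List A → Set A) (hV : ∀ w, Scᶜ ⊆ V w)
    (hnormV : Sc ⊆ So)
    (ScA SoA : Set A) (hcA : ScA ⊆ Sc) (hoA : SoA ⊆ So)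
    (hnormA : ScA ⊆ SoA)
    (Ldmg : Set (List A)) (hLd : Ldmg ⊆ LG)
    (hLdV : Ldmg ∩ LVG LG So V = ∅)
    (s : List A) (σ : A)
    (hap : AttackPair LG So V ScA SoA Ldmg s σ) :
    ∃ Att : List (List A × Set A) → Set A, (∀ x, Att x ⊆ ScA) ∧
      Enabling LG So V ScA SoA Att ∧
      Att (phat V SoA (proj So s)) = (V (proj So s) ∩ ScA) ∪ {σ} ∧
      (∀ w ∈ proj So '' LVG LG So V,
        phat V SoA w ≠ phat V SoA (proj So s) →
        Att (phat V SoA w) = V w ∩ ScA) ∧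
      Successful LG So V ScA SoA Att Ldmg ∧
      (LVAG LG So V ScA SoA Att \ LVG LG So V).Nonempty ∧
      LVAG LG So V ScA SoA Att \ LVG LG So V ⊆ Ldmg :=
  stmt_9_general So LG hnil V ScA SoA hoA hnormA Ldmg hLd hLdV s σ hap

end ActuatorAttack
end
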